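/- arXiv:2601.00611 — 8 statements merged into one kernel-verified Lean document; each statement's English description precedes it below -/
import Mathlib

section
/- Let F:[0,1]^n → ℝ≥0 be differentiable and γ-weakly DR-submodular for some γ ∈ (0,1], i.e., for all x ≤ y componentwise, ∇F(x) ≥ γ·∇F(y) componentwise. Then for all x, y ∈ [0,1]^n with x ≤ y and all λ ∈ [0,1], F(λx + (1-λ)y) ≥ (λ·F(x) + γ²(1-λ)·F(y)) / (λ + γ²(1-λ)). -/
/-!
Put `z = l • x + (1 - l) • y`, so `z - x = (1 - l) • (y - x)` and `y - z = l • (y - x)`, and let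
`E = F'(z) (y - x)`. Against nonnegative directions, every gradient on the segment from `x` to `z`
dominates `γ F'(z)`, and `γ` times every gradient on the segment from `z` to `y` is dominated by
`F'(z)`. The mean value theorem turns this into `F z - F x ≥ γ (1 - l) E` and
`γ (F y - F z) ≤ l E`; eliminating `E` gives `l (F z - F x) ≥ γ² (1 - l) (F y - F z)`.
-/

open Set

def WeaklyDRSubmodularOn {ι : Type*} [Fintype ι] [DecidableEq ι] (γ : ℝ) (F : (ι → ℝ) → ℝ)
    (s : Set (ι → ℝ)) : Prop :=
  ∀ x ∈ s, ∀ y ∈ s, x ≤ y → ∀ i, γ * fderiv ℝ F y (Pi.single i 1) ≤ fderiv ℝ F x (Pi.single i 1)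

section Segment

variable {E : Type*} [NormedAddCommGroup E] [NormedSpace ℝ E] {f : E → ℝ}

theorem hasDerivAt_comp_add_smul (hf : Differentiable ℝ f) (a v : E) (t : ℝ) :
    HasDerivAt (fun s : ℝ => f (a + s • v)) (fderiv ℝ f (a + t • v) v) t := by
  have hline : HasDerivAt (fun s : ℝ => a + s • v) v t := by
    simpa using ((hasDerivAt_id t).smul_const v).const_add a
  exact (hf (a + t • v)).hasFDerivAt.comp_hasDerivAt t hline

theorem le_sub_of_le_fderiv_segment (hf : Differentiable ℝ f) {a b : E} {c : ℝ}
    (h : ∀ t ∈ Icc (0 : ℝ) 1, c ≤ fderiv ℝ f (a + t • (b - a)) (b - a)) : c ≤ f b - f a := by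
  have hg := hasDerivAt_comp_add_smul hf a (b - a)
  have := (convex_Icc (0 : ℝ) 1).mul_sub_le_image_sub_of_le_deriv
    (fun t _ => (hg t).continuousAt.continuousWithinAt)
    (fun t _ => (hg t).differentiableAt.differentiableWithinAt)
    (fun t ht => (hg t).deriv ▸ h t (interior_subset ht))
    0 (left_mem_Icc.2 zero_le_one) 1 (right_mem_Icc.2 zero_le_one) zero_le_one
  simpa using this

theorem sub_le_of_fderiv_segment_le (hf : Differentiable ℝ f) {a b : E} {c : ℝ}
    (h : ∀ t ∈ Icc (0 : ℝ) 1, fderiv ℝ f (a + t • (b - a)) (b - a) ≤ c) : f b - f a ≤ c := by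
  have hg := hasDerivAt_comp_add_smul hf a (b - a)
  have := (convex_Icc (0 : ℝ) 1).image_sub_le_mul_sub_of_deriv_le
    (fun t _ => (hg t).continuousAt.continuousWithinAt)
    (fun t _ => (hg t).differentiableAt.differentiableWithinAt)
    (fun t ht => (hg t).deriv ▸ h t (interior_subset ht))
    0 (left_mem_Icc.2 zero_le_one) 1 (right_mem_Icc.2 zero_le_one) zero_le_one
  simpa using this

end Segment

theorem mem_Icc_add_smul_sub {E : Type*} [AddCommGroup E] [PartialOrder E] [IsOrderedAddMonoid E]
    [Module ℝ E] [PosSMulMono ℝ E] {a b : E} (hab : a ≤ b) {t : ℝ} (ht : t ∈ Icc (0 : ℝ) 1) :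
    a + t • (b - a) ∈ Icc a b := by
  have hba : 0 ≤ b - a := sub_nonneg.2 hab
  refine ⟨le_add_of_nonneg_right (smul_nonneg ht.1 hba), ?_⟩
  calc a + t • (b - a) ≤ a + (1 : ℝ) • (b - a) := by gcongr; exact ht.2
    _ = b := by simp

theorem ContinuousLinearMap.apply_le_apply_of_single_le {ι : Type*} [Fintype ι] [DecidableEq ι]
    {L M : (ι → ℝ) →L[ℝ] ℝ} (h : ∀ i, L (Pi.single i 1) ≤ M (Pi.single i 1)) {v : ι → ℝ}
    (hv : 0 ≤ v) : L v ≤ M v := by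
  rw [pi_eq_sum_univ' v, map_sum, map_sum]
  gcongr with i
  simp only [map_smul, smul_eq_mul]
  exact mul_le_mul_of_nonneg_left (h i) (hv i)

namespace WeaklyDRSubmodularOn

variable {ι : Type*} [Fintype ι] [DecidableEq ι] {γ : ℝ} {F : (ι → ℝ) → ℝ} {s : Set (ι → ℝ)}

theorem mul_fderiv_le (hF : WeaklyDRSubmodularOn γ F s) {x y : ι → ℝ} (hx : x ∈ s) (hy : y ∈ s)
    (hxy : x ≤ y) {v : ι → ℝ} (hv : 0 ≤ v) : γ * fderiv ℝ F y v ≤ fderiv ℝ F x v := by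
  rw [← smul_eq_mul, ← smul_apply]
  exact ContinuousLinearMap.apply_le_apply_of_single_le (fun i => hF x hx y hy hxy i) hv

variable [s.OrdConnected]

theorem add_mul_fderiv_le (hF : WeaklyDRSubmodularOn γ F s) (hd : Differentiable ℝ F)
    {a b : ι → ℝ} (ha : a ∈ s) (hb : b ∈ s) (hab : a ≤ b) :
    F a + γ * fderiv ℝ F b (b - a) ≤ F b := by
  have := le_sub_of_le_fderiv_segment hd fun t ht =>
    have hp := mem_Icc_add_smul_sub hab ht
    hF.mul_fderiv_le (Set.Icc_subset s ha hb hp) hb hp.2 (sub_nonneg.2 hab)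
  linarith

theorem mul_sub_le_fderiv (hF : WeaklyDRSubmodularOn γ F s) (hd : Differentiable ℝ F)
    {a b : ι → ℝ} (ha : a ∈ s) (hb : b ∈ s) (hab : a ≤ b) :
    γ * (F b - F a) ≤ fderiv ℝ F a (b - a) := by
  have hseg : ∀ t ∈ Icc (0 : ℝ) 1,
      fderiv ℝ (fun x => γ * F x) (a + t • (b - a)) (b - a) ≤ fderiv ℝ F a (b - a) := by
    intro t ht
    have hp := mem_Icc_add_smul_sub hab ht
    rw [fderiv_const_mul (hd _)]
    exact hF.mul_fderiv_le ha (Set.Icc_subset s ha hb hp) hp.1 (sub_nonneg.2 hab)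
  simpa [mul_sub] using sub_le_of_fderiv_segment_le (hd.const_mul γ) hseg

end WeaklyDRSubmodularOn

theorem stmt0_general (n : ℕ) (γ : ℝ) (hγ0 : 0 < γ)
    (F : (Fin n → ℝ) → ℝ)
    (hF : Differentiable ℝ F)
    (hDR : ∀ x ∈ Icc (0 : Fin n → ℝ) 1, ∀ y ∈ Icc (0 : Fin n → ℝ) 1,
      x ≤ y → ∀ i, γ * fderiv ℝ F y (Pi.single i 1) ≤ fderiv ℝ F x (Pi.single i 1))
    (x y : Fin n → ℝ) (hx : x ∈ Icc (0 : Fin n → ℝ) 1) (hy : y ∈ Icc (0 : Fin n → ℝ) 1)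
    (hxy : x ≤ y) (l : ℝ) (hl : l ∈ Icc (0 : ℝ) 1) :
    (l * F x + γ ^ 2 * (1 - l) * F y) / (l + γ ^ 2 * (1 - l))
      ≤ F (l • x + (1 - l) • y) := by
  obtain ⟨hl0, hl1⟩ := hl
  have hWDR : WeaklyDRSubmodularOn γ F (Icc 0 1) := hDR
  set z := l • x + (1 - l) • y
  have hzx : z - x = (1 - l) • (y - x) := by simp only [z, smul_sub, sub_smul, one_smul]; abel
  have hyz : y - z = l • (y - x) := by simp only [z, smul_sub, sub_smul, one_smul]; abel
  have hxz : x ≤ z := sub_nonneg.1 (hzx ▸ smul_nonneg (sub_nonneg.2 hl1) (sub_nonneg.2 hxy))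
  have hzy : z ≤ y := sub_nonneg.1 (hyz ▸ smul_nonneg hl0 (sub_nonneg.2 hxy))
  have hz : z ∈ Icc (0 : Fin n → ℝ) 1 := ⟨hx.1.trans hxz, hzy.trans hy.2⟩
  have lower := hWDR.add_mul_fderiv_le hF hx hz hxz
  have upper := hWDR.mul_sub_le_fderiv hF hz hy hzy
  rw [hzx, map_smul, smul_eq_mul] at lower
  rw [hyz, map_smul, smul_eq_mul] at upper
  have hden : 0 < l + γ ^ 2 * (1 - l) := by
    rcases hl0.eq_or_lt with rfl | hl0
    · simpa using pow_pos hγ0 2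
    · exact add_pos_of_pos_of_nonneg hl0 (by have := sub_nonneg.2 hl1; positivity)
  rw [div_le_iff₀ hden]
  linarith [mul_le_mul_of_nonneg_left lower hl0,
    mul_le_mul_of_nonneg_left upper (mul_nonneg hγ0.le (sub_nonneg.2 hl1))]

/-- For a differentiable, nonnegative, γ-weakly DR-submodular
`F : [0,1]^n → ℝ≥0`, for all `x ≤ y` in the box and `λ ∈ [0,1]`,
`F(λx + (1-λ)y) ≥ (λ F(x) + γ²(1-λ) F(y)) / (λ + γ²(1-λ))`. -/
theorem stmt0 (n : ℕ) (γ : ℝ) (hγ0 : 0 < γ) (hγ1 : γ ≤ 1)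
    (F : (Fin n → ℝ) → ℝ)
    (hF : Differentiable ℝ F)
    (hnonneg : ∀ x ∈ Icc (0 : Fin n → ℝ) 1, 0 ≤ F x)
    (hDR : ∀ x ∈ Icc (0 : Fin n → ℝ) 1, ∀ y ∈ Icc (0 : Fin n → ℝ) 1,
      x ≤ y → ∀ i, γ * fderiv ℝ F y (Pi.single i 1) ≤ fderiv ℝ F x (Pi.single i 1))
    (x y : Fin n → ℝ) (hx : x ∈ Icc (0 : Fin n → ℝ) 1) (hy : y ∈ Icc (0 : Fin n → ℝ) 1)
    (hxy : x ≤ y) (l : ℝ) (hl : l ∈ Icc (0 : ℝ) 1) :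
    (l * F x + γ ^ 2 * (1 - l) * F y) / (l + γ ^ 2 * (1 - l))
      ≤ F (l • x + (1 - l) • y) :=
  stmt0_general n γ hγ0 F hF hDR x y hx hy hxy l hl
end

section
/- Let F:[0,1]^n → ℝ≥0 be differentiable and γ-weakly DR-submodular for γ ∈ (0,1]. If x, y ∈ [0,1]^n with y ≥ 0 and x + y ∈ [0,1]^n, then for all λ ∈ [0,1], F(x + λy) − F(x) ≥ (γ²λ / (1 − λ + γ²λ)) · (F(x + y) − F(x)). -/
open Set

/-- For a differentiable, nonnegative, γ-weakly DR-submodular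
`F : [0,1]^n → ℝ≥0`, if `y ≥ 0` and `x + y ∈ [0,1]^n`, then for all `λ ∈ [0,1]`,
`F(x + λy) − F(x) ≥ (γ²λ / (1 − λ + γ²λ)) (F(x+y) − F(x))`. -/
theorem stmt1 (n : ℕ) (γ : ℝ) (hγ0 : 0 < γ) (hγ1 : γ ≤ 1)
    (F : (Fin n → ℝ) → ℝ)
    (hF : Differentiable ℝ F)
    (hnonneg : ∀ x ∈ Icc (0 : Fin n → ℝ) 1, 0 ≤ F x)
    (hDR : ∀ x ∈ Icc (0 : Fin n → ℝ) 1, ∀ y ∈ Icc (0 : Fin n → ℝ) 1,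
      x ≤ y → ∀ i, γ * fderiv ℝ F y (Pi.single i 1) ≤ fderiv ℝ F x (Pi.single i 1))
    (x y : Fin n → ℝ) (hx : x ∈ Icc (0 : Fin n → ℝ) 1) (hy : y ∈ Icc (0 : Fin n → ℝ) 1)
    (hy0 : 0 ≤ y) (hxy : x + y ∈ Icc (0 : Fin n → ℝ) 1)
    (l : ℝ) (hl : l ∈ Icc (0 : ℝ) 1) :
    γ ^ 2 * l / (1 - l + γ ^ 2 * l) * (F (x + y) - F x) ≤ F (x + l • y) - F x := by
  obtain ⟨hl0, hl1⟩ := hl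
  -- expansion of y
  have hy_eq : y = ∑ i, y i • (Pi.single i 1 : Fin n → ℝ) := by
    ext j
    simp [Pi.single_apply]
  have hexp : ∀ w : Fin n → ℝ, fderiv ℝ F w y = ∑ i, y i * fderiv ℝ F w (Pi.single i 1) := by
    intro w
    conv_lhs => rw [hy_eq]
    simp [map_sum, map_smul, smul_eq_mul]
  -- key directional inequality
  have hkey : ∀ u ∈ Icc (0 : Fin n → ℝ) 1, ∀ v ∈ Icc (0 : Fin n → ℝ) 1, u ≤ v →
      γ * fderiv ℝ F v y ≤ fderiv ℝ F u y := by
    intro u hu v hv huv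
    rw [hexp u, hexp v, Finset.mul_sum]
    apply Finset.sum_le_sum
    intro i _
    have hyi : (0:ℝ) ≤ y i := by simpa using hy0 i
    have h := mul_le_mul_of_nonneg_left (hDR u hu v hv huv i) hyi
    nlinarith [h]
  -- membership of points on segment
  have hbox : ∀ t : ℝ, t ∈ Icc (0:ℝ) 1 → x + t • y ∈ Icc (0 : Fin n → ℝ) 1 := by
    intro t ht
    constructor
    · intro i
      have := hx.1 i
      have := hy0 i
      simp only [Pi.add_apply, Pi.smul_apply, smul_eq_mul, Pi.zero_apply] at *
      nlinarith [ht.1]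
    · intro i
      have h1 := hxy.2 i
      have := hy0 i
      simp only [Pi.add_apply, Pi.smul_apply, smul_eq_mul, Pi.one_apply, Pi.zero_apply] at *
      nlinarith [ht.2]
  have hord : ∀ s t : ℝ, s ≤ t → x + s • y ≤ x + t • y := by
    intro s t hst i
    have := hy0 i
    simp only [Pi.add_apply, Pi.smul_apply, smul_eq_mul, Pi.zero_apply] at *
    nlinarith
  -- g and its derivative
  set g : ℝ → ℝ := fun t => F (x + t • y) with hgdef
  have hg : ∀ t : ℝ, HasDerivAt g (fderiv ℝ F (x + t • y) y) t := by
    intro t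
    have h1 : HasDerivAt (fun t : ℝ => x + t • y) y t := by
      simpa using ((hasDerivAt_id t).smul_const y).const_add x
    exact (hF (x + t • y)).hasFDerivAt.comp_hasDerivAt t h1
  set D : ℝ := fderiv ℝ F (x + l • y) y with hDdef
  have hlbox : x + l • y ∈ Icc (0 : Fin n → ℝ) 1 := hbox l ⟨hl0, hl1⟩
  -- Claim A : γ * l * D ≤ g l - g 0
  have claimA : γ * l * D ≤ g l - g 0 := by
    have hmono : MonotoneOn (fun s => g s - γ * D * s) (Icc 0 l) := by
      apply monotoneOn_of_deriv_nonneg (convex_Icc 0 l)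
      · have hgc : Continuous g := hF.continuous.comp (by fun_prop)
        exact (hgc.sub (continuous_const.mul continuous_id)).continuousOn
      · intro s _
        exact ((hg s).sub (((hasDerivAt_id s).const_mul (γ * D)))).differentiableAt.differentiableWithinAt
      · intro s hs
        rw [interior_Icc] at hs
        have hd : deriv (fun s => g s - γ * D * s) s = fderiv ℝ F (x + s • y) y - γ * D * 1 :=
          ((hg s).sub (((hasDerivAt_id s).const_mul (γ * D)))).deriv
        rw [hd]
        have hsmem : s ∈ Icc (0:ℝ) 1 := ⟨hs.1.le, hs.2.le.trans hl1⟩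
        have := hkey (x + s • y) (hbox s hsmem) (x + l • y) hlbox (hord s l hs.2.le)
        linarith
    have := hmono (left_mem_Icc.mpr hl0) (right_mem_Icc.mpr hl0) hl0
    simp only at this
    nlinarith
  -- Claim B : γ * (g 1 - g l) ≤ (1 - l) * D
  have claimB : γ * (g 1 - g l) ≤ (1 - l) * D := by
    have hmono : MonotoneOn (fun t => D * t - γ * g t) (Icc l 1) := by
      apply monotoneOn_of_deriv_nonneg (convex_Icc l 1)
      · have hgc : Continuous g := hF.continuous.comp (by fun_prop)
        exact ((continuous_const.mul continuous_id).sub (continuous_const.mul hgc)).continuousOn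
      · intro t _
        exact (((hasDerivAt_id t).const_mul D).sub ((hg t).const_mul γ)).differentiableAt.differentiableWithinAt
      · intro t ht
        rw [interior_Icc] at ht
        have hd : deriv (fun t => D * t - γ * g t) t = D * 1 - γ * fderiv ℝ F (x + t • y) y :=
          (((hasDerivAt_id t).const_mul D).sub ((hg t).const_mul γ)).deriv
        rw [hd]
        have htmem : t ∈ Icc (0:ℝ) 1 := ⟨hl0.trans ht.1.le, ht.2.le⟩
        have := hkey (x + l • y) hlbox (x + t • y) (hbox t htmem) (hord l t ht.1.le)
        linarith
    have := hmono (left_mem_Icc.mpr hl1) (right_mem_Icc.mpr hl1) hl1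
    simp only at this
    nlinarith
  -- combine
  have hγ2 : γ ^ 2 ≤ 1 := by nlinarith
  have hden : 0 < 1 - l + γ ^ 2 * l := by
    nlinarith [mul_pos hγ0 hγ0, mul_nonneg (sub_nonneg.mpr hl1) (sub_nonneg.mpr hγ2)]
  rw [div_mul_eq_mul_div, div_le_iff₀ hden]
  have hg0 : g 0 = F x := by simp [hgdef]
  have hg1 : g 1 = F (x + y) := by simp [hgdef]
  have hgl : g l = F (x + l • y) := rfl
  rw [← hg0, ← hg1, ← hgl]
  nlinarith [claimA, claimB, mul_le_mul_of_nonneg_left claimB (mul_nonneg hγ0.le hl0),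
    mul_le_mul_of_nonneg_left claimA (sub_nonneg.mpr hl1)]
end

section
/- Let F:[0,1]^n → ℝ≥0 be differentiable and γ-weakly DR-submodular for γ ∈ (0,1]. For every x, y ∈ [0,1]^n with y ≥ 0 and x − y ≥ 0 (componentwise), ⟨∇F(x), y⟩ ≤ (1/γ)·(F(x) − F(x−y)). -/
/-!
Along the segment `t ↦ x - y + t • y` from `x - y` to `x`, every point lies below `x`, so weak
DR-submodularity bounds each partial derivative there from below by `γ` times the one at `x`;
since `y ≥ 0`, the directional derivative of `F` along `y` is at least `γ ⟨∇F(x), y⟩` on the whole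
segment, and the mean value theorem turns this into `γ ⟨∇F(x), y⟩ ≤ F(x) - F(x - y)`.
-/

open Set

theorem apply_eq_sum_mul_apply_single {ι : Type*} [Fintype ι] [DecidableEq ι]
    (ℓ : (ι → ℝ) →L[ℝ] ℝ) (v : ι → ℝ) : ℓ v = ∑ i, v i * ℓ (Pi.single i 1) := by
  conv_lhs => rw [← Finset.univ_sum_single v]
  rw [map_sum]
  refine Finset.sum_congr rfl fun i _ => ?_
  rw [← smul_eq_mul, ← map_smul, ← Pi.single_smul, smul_eq_mul, mul_one]

theorem mul_apply_le_apply_of_forall_single {ι : Type*} [Fintype ι] [DecidableEq ι]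
    {ℓ ℓ' : (ι → ℝ) →L[ℝ] ℝ} {γ : ℝ}
    (h : ∀ i, γ * ℓ' (Pi.single i 1) ≤ ℓ (Pi.single i 1)) {v : ι → ℝ} (hv : 0 ≤ v) :
    γ * ℓ' v ≤ ℓ v := by
  rw [apply_eq_sum_mul_apply_single ℓ, apply_eq_sum_mul_apply_single ℓ', Finset.mul_sum]
  refine Finset.sum_le_sum fun i _ => ?_
  calc γ * (v i * ℓ' (Pi.single i 1)) = v i * (γ * ℓ' (Pi.single i 1)) := by ring
    _ ≤ v i * ℓ (Pi.single i 1) := mul_le_mul_of_nonneg_left (h i) (hv i)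

theorem le_sub_of_le_fderiv_lineMap {E : Type*} [NormedAddCommGroup E] [NormedSpace ℝ E]
    {F : E → ℝ} (hF : Differentiable ℝ F) {a b : E} {C : ℝ}
    (hC : ∀ t ∈ Ioo (0 : ℝ) 1, C ≤ fderiv ℝ F (AffineMap.lineMap a b t) (b - a)) :
    C ≤ F b - F a := by
  have hderiv : ∀ t : ℝ, HasDerivAt (fun t => F (AffineMap.lineMap a b t))
      (fderiv ℝ F (AffineMap.lineMap a b t) (b - a)) t := fun t =>
    (hF _).hasFDerivAt.comp_hasDerivAt t AffineMap.hasDerivAt_lineMap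
  have hmvt := (convex_Icc (0 : ℝ) 1).mul_sub_le_image_sub_of_le_deriv
    (fun t _ => (hderiv t).continuousAt.continuousWithinAt)
    (fun t _ => (hderiv t).differentiableAt.differentiableWithinAt)
    (fun t ht => by rw [(hderiv t).deriv]; exact hC t (by simpa using ht))
    0 (left_mem_Icc.2 zero_le_one) 1 (right_mem_Icc.2 zero_le_one) zero_le_one
  simpa using hmvt

theorem stmt3_general (n : ℕ) (γ : ℝ) (hγ0 : 0 < γ)
    (F : (Fin n → ℝ) → ℝ)
    (hF : Differentiable ℝ F)
    (hDR : ∀ x ∈ Icc (0 : Fin n → ℝ) 1, ∀ y ∈ Icc (0 : Fin n → ℝ) 1,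
      x ≤ y → ∀ i, γ * fderiv ℝ F y (Pi.single i 1) ≤ fderiv ℝ F x (Pi.single i 1))
    (x y : Fin n → ℝ) (hx : x ∈ Icc (0 : Fin n → ℝ) 1)
    (hy0 : 0 ≤ y) (hdiff : 0 ≤ x - y) :
    fderiv ℝ F x y ≤ 1 / γ * (F x - F (x - y)) := by
  have hseg : ∀ t ∈ Ioo (0 : ℝ) 1,
      γ * fderiv ℝ F x y ≤ fderiv ℝ F (AffineMap.lineMap (x - y) x t) (x - (x - y)) := by
    intro t ht
    have hz : AffineMap.lineMap (x - y) x t ∈ Icc (x - y) x :=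
      (convex_Icc _ _).lineMap_mem (left_mem_Icc.2 (sub_le_self _ hy0))
        (right_mem_Icc.2 (sub_le_self _ hy0)) (Ioo_subset_Icc_self ht)
    rw [sub_sub_cancel]
    exact mul_apply_le_apply_of_forall_single
      (hDR _ (Icc_subset_Icc hdiff hx.2 hz) x hx hz.2) hy0
  rw [one_div, inv_mul_eq_div, le_div_iff₀ hγ0, mul_comm]
  exact le_sub_of_le_fderiv_lineMap hF hseg

/-- For a differentiable, nonnegative, γ-weakly DR-submodular
`F : [0,1]^n → ℝ≥0`, if `y ≥ 0` and `x − y ≥ 0`, then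
`⟨∇F(x), y⟩ ≤ (1/γ)(F(x) − F(x−y))`. -/
theorem stmt3 (n : ℕ) (γ : ℝ) (hγ0 : 0 < γ) (hγ1 : γ ≤ 1)
    (F : (Fin n → ℝ) → ℝ)
    (hF : Differentiable ℝ F)
    (hnonneg : ∀ x ∈ Icc (0 : Fin n → ℝ) 1, 0 ≤ F x)
    (hDR : ∀ x ∈ Icc (0 : Fin n → ℝ) 1, ∀ y ∈ Icc (0 : Fin n → ℝ) 1,
      x ≤ y → ∀ i, γ * fderiv ℝ F y (Pi.single i 1) ≤ fderiv ℝ F x (Pi.single i 1))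
    (x y : Fin n → ℝ) (hx : x ∈ Icc (0 : Fin n → ℝ) 1) (hy : y ∈ Icc (0 : Fin n → ℝ) 1)
    (hy0 : 0 ≤ y) (hdiff : 0 ≤ x - y) :
    fderiv ℝ F x y ≤ 1 / γ * (F x - F (x - y)) :=
  stmt3_general n γ hγ0 F hF hDR x y hx hy0 hdiff
end

section
/- Let F:[0,1]^n → ℝ≥0 be γ-weakly DR-submodular (in the coordinatewise increment sense) for γ ∈ (0,1], and fix y ∈ [0,1]^n. Define G(x) := F(x ⊕ y), where (x ⊕ y)_i := x_i + y_i − x_i·y_i. Then G is nonnegative and γ-weakly DR-submodular: for all x¹ ≤ x² in [0,1]^n, each coordinate u, and each step p ≥ 0 with x² + p·e_u ∈ [0,1]^n, G(x¹ + p·e_u) − G(x¹) ≥ γ·(G(x² + p·e_u) − G(x²)). -/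
open Set

/-- If `F : [0,1]^n → ℝ≥0` is nonnegative and γ-weakly DR-submodular in the
coordinatewise increment sense, then for fixed `y ∈ [0,1]^n` the function
`G(x) := F(x ⊕ y)`, where `(x ⊕ y)_i = x_i + y_i − x_i y_i`, is nonnegative and
γ-weakly DR-submodular. -/
theorem stmt5 (n : ℕ) (γ : ℝ) (hγ0 : 0 < γ) (hγ1 : γ ≤ 1)
    (F : (Fin n → ℝ) → ℝ)
    (hnonneg : ∀ x ∈ Icc (0 : Fin n → ℝ) 1, 0 ≤ F x)
    (hDR : ∀ a ∈ Icc (0 : Fin n → ℝ) 1, ∀ b ∈ Icc (0 : Fin n → ℝ) 1, a ≤ b →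
      ∀ (i : Fin n) (c : ℝ), 0 < c →
        a + Pi.single i c ∈ Icc (0 : Fin n → ℝ) 1 →
        b + Pi.single i c ∈ Icc (0 : Fin n → ℝ) 1 →
        γ * (F (b + Pi.single i c) - F b) ≤ F (a + Pi.single i c) - F a)
    (y : Fin n → ℝ) (hy : y ∈ Icc (0 : Fin n → ℝ) 1) :
    (∀ x ∈ Icc (0 : Fin n → ℝ) 1, 0 ≤ F (fun i => x i + y i - x i * y i)) ∧
    (∀ x₁ ∈ Icc (0 : Fin n → ℝ) 1, ∀ x₂ ∈ Icc (0 : Fin n → ℝ) 1, x₁ ≤ x₂ →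
      ∀ (u : Fin n) (p : ℝ), 0 ≤ p →
        x₂ + Pi.single u p ∈ Icc (0 : Fin n → ℝ) 1 →
        γ * (F (fun i => (x₂ i + (Pi.single u p : Fin n → ℝ) i) + y i - (x₂ i + (Pi.single u p : Fin n → ℝ) i) * y i)
              - F (fun i => x₂ i + y i - x₂ i * y i))
          ≤ F (fun i => (x₁ i + (Pi.single u p : Fin n → ℝ) i) + y i - (x₁ i + (Pi.single u p : Fin n → ℝ) i) * y i)
              - F (fun i => x₁ i + y i - x₁ i * y i)) := by
  obtain ⟨hy0, hy1⟩ := hy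
  -- x ⊕ y stays in the cube
  have key : ∀ x ∈ Icc (0 : Fin n → ℝ) 1,
      (fun i => x i + y i - x i * y i) ∈ Icc (0 : Fin n → ℝ) 1 := by
    rintro x ⟨hx0, hx1⟩
    refine ⟨fun i => ?_, fun i => ?_⟩
    · have h1 := hx0 i; have h2 := hy0 i; have h3 := hx1 i; have h4 := hy1 i
      simp only [Pi.zero_apply, Pi.one_apply] at h1 h2 h3 h4
      show (0:ℝ) ≤ x i + y i - x i * y i
      nlinarith
    · have h1 := hx0 i; have h2 := hy0 i; have h3 := hx1 i; have h4 := hy1 i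
      simp only [Pi.zero_apply, Pi.one_apply] at h1 h2 h3 h4
      show x i + y i - x i * y i ≤ (1:ℝ)
      nlinarith
  refine ⟨fun x hx => hnonneg _ (key x hx), ?_⟩
  intro x₁ hx₁ x₂ hx₂ hle u p hp hmem₂
  rcases eq_or_lt_of_le hp with hp0 | hp0
  · -- p = 0 : both differences vanish
    subst hp0
    simp
  -- x₁ + p·e_u is also in the cube
  have hmem₁ : x₁ + Pi.single u p ∈ Icc (0 : Fin n → ℝ) 1 := by
    refine ⟨fun i => ?_, fun i => le_trans (by exact add_le_add (hle i) le_rfl) (hmem₂.2 i)⟩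
    have := hx₁.1 i
    simp only [Pi.zero_apply, Pi.add_apply] at *
    rcases eq_or_ne i u with rfl | h
    · simp [Pi.single_eq_same]; positivity
    · simp [Pi.single_eq_of_ne h]; linarith
  rcases eq_or_lt_of_le (hy1 u) with hyu | hyu
  · -- y u = 1 : shifted and unshifted ⊕-points coincide
    have e1 : (fun i => (x₁ i + (Pi.single u p : Fin n → ℝ) i) + y i
        - (x₁ i + (Pi.single u p : Fin n → ℝ) i) * y i)
        = (fun i => x₁ i + y i - x₁ i * y i) := by
      funext i
      rcases eq_or_ne i u with rfl | h
      · have hyu' : y i = 1 := hyu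
        simp only [Pi.single_eq_same, hyu']; ring
      · simp [Pi.single_eq_of_ne h]
    have e2 : (fun i => (x₂ i + (Pi.single u p : Fin n → ℝ) i) + y i
        - (x₂ i + (Pi.single u p : Fin n → ℝ) i) * y i)
        = (fun i => x₂ i + y i - x₂ i * y i) := by
      funext i
      rcases eq_or_ne i u with rfl | h
      · have hyu' : y i = 1 := hyu
        simp only [Pi.single_eq_same, hyu']; ring
      · simp [Pi.single_eq_of_ne h]
    rw [e1, e2]
    simp
  · -- y u < 1 : apply hDR with step c = p (1 - y u) > 0
    set c : ℝ := p * (1 - y u) with hc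
    have hcpos : 0 < c := by
      have : 1 - y u > 0 := by simp only [Pi.one_apply] at hyu; linarith
      exact mul_pos hp0 this
    have shift : ∀ x : Fin n → ℝ,
        ((fun i => x i + y i - x i * y i) + Pi.single u c)
        = (fun i => (x i + (Pi.single u p : Fin n → ℝ) i) + y i
            - (x i + (Pi.single u p : Fin n → ℝ) i) * y i) := by
      intro x
      funext i
      rcases eq_or_ne i u with rfl | h
      · simp only [Pi.add_apply, Pi.single_eq_same, hc]; ring
      · simp [Pi.single_eq_of_ne h]
    have ha := key x₁ hx₁
    have hb := key x₂ hx₂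
    have hab : (fun i => x₁ i + y i - x₁ i * y i) ≤ (fun i => x₂ i + y i - x₂ i * y i) := by
      intro i
      have h1 := hle i; have h2 := hy1 i
      simp only [Pi.one_apply] at h2
      show x₁ i + y i - x₁ i * y i ≤ x₂ i + y i - x₂ i * y i
      nlinarith
    have ha' : (fun i => x₁ i + y i - x₁ i * y i) + Pi.single u c ∈ Icc (0 : Fin n → ℝ) 1 := by
      rw [shift x₁]; exact key _ hmem₁
    have hb' : (fun i => x₂ i + y i - x₂ i * y i) + Pi.single u c ∈ Icc (0 : Fin n → ℝ) 1 := by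
      rw [shift x₂]; exact key _ hmem₂
    have := hDR _ ha _ hb hab u c hcpos ha' hb'
    rwa [shift x₁, shift x₂] at this
end

section
/- Let F:[0,1]^n → ℝ≥0 be differentiable and γ-weakly DR-submodular for γ ∈ (0,1]. Suppose x ∈ [0,1]^n satisfies the local-optimality condition ⟨y − x, ∇F(x)⟩ ≤ 0 for a given y ∈ [0,1]^n. Then F(x) ≥ (γ²·F(x ∨ y) + F(x ∧ y)) / (1 + γ²), where ∨ and ∧ denote componentwise max and min. -/
open Set

/-! Along the segment from `x` to `x ⊔ y` the gradient is at most `γ⁻¹ ∇F(x)`, and along the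
segment from `x ⊓ y` to `x` it is at least `γ ∇F(x)`; by the mean value theorem
`γ (F(x ⊔ y) - F(x)) ≤ ⟨x ⊔ y - x, ∇F(x)⟩` and `γ ⟨x - x ⊓ y, ∇F(x)⟩ ≤ F(x) - F(x ⊓ y)`.
Since `x ⊔ y + x ⊓ y = x + y`, the two directional derivatives differ by `⟨y - x, ∇F(x)⟩ ≤ 0`,
so `γ² (F(x ⊔ y) - F(x)) ≤ F(x) - F(x ⊓ y)`. -/

variable {ι : Type*} [Fintype ι]

theorem exists_mem_Icc_sub_eq_fderiv_apply {F : (ι → ℝ) → ℝ} {x y : ι → ℝ} (hxy : x ≤ y)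
    (hF : ∀ z ∈ Icc x y, DifferentiableAt ℝ F z) :
    ∃ z ∈ Icc x y, F y - F x = fderiv ℝ F z (y - x) := by
  obtain ⟨z, hz, h⟩ := domain_mvt (fun z hz => (hF z hz).hasFDerivAt.hasFDerivWithinAt)
    (convex_Icc x y) (left_mem_Icc.2 hxy) (right_mem_Icc.2 hxy)
  exact ⟨z, segment_subset_Icc hxy hz, h⟩

variable [DecidableEq ι]

theorem ContinuousLinearMap.apply_le_apply_of_apply_single_le {L₁ L₂ : (ι → ℝ) →L[ℝ] ℝ}
    (h : ∀ i, L₁ (Pi.single i 1) ≤ L₂ (Pi.single i 1)) {d : ι → ℝ} (hd : 0 ≤ d) :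
    L₁ d ≤ L₂ d := by
  have expand : ∀ L : (ι → ℝ) →L[ℝ] ℝ, L d = ∑ i, d i * L (Pi.single i 1) := fun L => by
    conv_lhs => rw [pi_eq_sum_univ' d, map_sum]
    simp only [map_smul, smul_eq_mul]
  rw [expand L₁, expand L₂]
  exact Finset.sum_le_sum fun i _ => mul_le_mul_of_nonneg_left (h i) (hd i)

theorem mul_sub_le_fderiv_apply_of_le {F : (ι → ℝ) → ℝ} {γ : ℝ} {x y : ι → ℝ} (hxy : x ≤ y)
    (hF : ∀ z ∈ Icc x y, DifferentiableAt ℝ F z)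
    (hDR : ∀ z ∈ Icc x y, ∀ i, γ * fderiv ℝ F z (Pi.single i 1) ≤ fderiv ℝ F x (Pi.single i 1)) :
    γ * (F y - F x) ≤ fderiv ℝ F x (y - x) := by
  obtain ⟨z, hz, hmvt⟩ := exists_mem_Icc_sub_eq_fderiv_apply hxy hF
  rw [hmvt]
  exact ContinuousLinearMap.apply_le_apply_of_apply_single_le (L₁ := γ • fderiv ℝ F z)
    (hDR z hz) (sub_nonneg.2 hxy)

theorem mul_fderiv_apply_le_sub_of_le {F : (ι → ℝ) → ℝ} {γ : ℝ} {x y : ι → ℝ} (hxy : x ≤ y)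
    (hF : ∀ z ∈ Icc x y, DifferentiableAt ℝ F z)
    (hDR : ∀ z ∈ Icc x y, ∀ i, γ * fderiv ℝ F y (Pi.single i 1) ≤ fderiv ℝ F z (Pi.single i 1)) :
    γ * fderiv ℝ F y (y - x) ≤ F y - F x := by
  obtain ⟨z, hz, hmvt⟩ := exists_mem_Icc_sub_eq_fderiv_apply hxy hF
  rw [hmvt]
  exact ContinuousLinearMap.apply_le_apply_of_apply_single_le (L₁ := γ • fderiv ℝ F y)
    (hDR z hz) (sub_nonneg.2 hxy)

theorem stmt6_general (n : ℕ) (γ : ℝ) (hγ0 : 0 < γ)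
    (F : (Fin n → ℝ) → ℝ)
    (hF : Differentiable ℝ F)
    (hDR : ∀ x ∈ Icc (0 : Fin n → ℝ) 1, ∀ y ∈ Icc (0 : Fin n → ℝ) 1,
      x ≤ y → ∀ i, γ * fderiv ℝ F y (Pi.single i 1) ≤ fderiv ℝ F x (Pi.single i 1))
    (x y : Fin n → ℝ) (hx : x ∈ Icc (0 : Fin n → ℝ) 1) (hy : y ∈ Icc (0 : Fin n → ℝ) 1)
    (hloc : fderiv ℝ F x (y - x) ≤ 0) :
    (γ ^ 2 * F (x ⊔ y) + F (x ⊓ y)) / (1 + γ ^ 2) ≤ F x := by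
  set L := fderiv ℝ F x
  have hup : γ * (F (x ⊔ y) - F x) ≤ L (x ⊔ y - x) :=
    mul_sub_le_fderiv_apply_of_le le_sup_left (fun z _ => hF z) fun z hz =>
      hDR x hx z ⟨hx.1.trans hz.1, hz.2.trans (sup_le hx.2 hy.2)⟩ hz.1
  have hlow : γ * L (x - x ⊓ y) ≤ F x - F (x ⊓ y) :=
    mul_fderiv_apply_le_sub_of_le inf_le_left (fun z _ => hF z) fun z hz =>
      hDR z ⟨(le_inf hx.1 hy.1).trans hz.1, hz.2.trans hx.2⟩ x hx hz.2
  have hdir : L (x ⊔ y - x) - L (x - x ⊓ y) = L (y - x) := by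
    rw [← map_sub]
    congr 1
    linear_combination inf_add_sup x y
  have hγ : 0 ≤ γ := hγ0.le
  rw [div_le_iff₀ (by positivity)]
  nlinarith [mul_le_mul_of_nonneg_left hup hγ, mul_le_mul_of_nonneg_left hloc hγ]

/-- For a differentiable, nonnegative, γ-weakly DR-submodular
`F : [0,1]^n → ℝ≥0`, if `x` is a local optimum with respect to `y`
(i.e. `⟨y − x, ∇F(x)⟩ ≤ 0`), then
`F(x) ≥ (γ² F(x ∨ y) + F(x ∧ y)) / (1 + γ²)`. -/
theorem stmt6 (n : ℕ) (γ : ℝ) (hγ0 : 0 < γ) (hγ1 : γ ≤ 1)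
    (F : (Fin n → ℝ) → ℝ)
    (hF : Differentiable ℝ F)
    (hnonneg : ∀ x ∈ Icc (0 : Fin n → ℝ) 1, 0 ≤ F x)
    (hDR : ∀ x ∈ Icc (0 : Fin n → ℝ) 1, ∀ y ∈ Icc (0 : Fin n → ℝ) 1,
      x ≤ y → ∀ i, γ * fderiv ℝ F y (Pi.single i 1) ≤ fderiv ℝ F x (Pi.single i 1))
    (x y : Fin n → ℝ) (hx : x ∈ Icc (0 : Fin n → ℝ) 1) (hy : y ∈ Icc (0 : Fin n → ℝ) 1)
    (hloc : fderiv ℝ F x (y - x) ≤ 0) :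
    (γ ^ 2 * F (x ⊔ y) + F (x ⊓ y)) / (1 + γ ^ 2) ≤ F x :=
  stmt6_general n γ hγ0 F hF hDR x y hx hy hloc
end

section
/- Let F:[0,1]^n → ℝ≥0 be differentiable and γ-weakly DR-submodular for γ ∈ (0,1], and let x, y ∈ [0,1]^n. Then ⟨y − x, ∇F(x)⟩ ≥ γ·F(x ∨ y) + (1/γ)·F(x ∧ y) − ((1+γ²)/γ)·F(x). -/
open Set

/-- A linear functional applied to a vector equals the weighted sum over basis vectors. -/
lemma lin_apply_sum {n : ℕ} (L : (Fin n → ℝ) →L[ℝ] ℝ) (v : Fin n → ℝ) :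
    L v = ∑ i, v i * L (Pi.single i 1) := by
  have hv : v = ∑ i, v i • (Pi.single i 1 : Fin n → ℝ) := by
    funext j
    simp [Finset.sum_apply, Pi.single_apply]
  conv_lhs => rw [hv]
  rw [map_sum]
  simp [smul_eq_mul]

lemma lin_le {n : ℕ} (γ : ℝ) (L₁ L₂ : (Fin n → ℝ) →L[ℝ] ℝ) (v : Fin n → ℝ)
    (hv : (0 : Fin n → ℝ) ≤ v)
    (h : ∀ i, γ * L₂ (Pi.single i 1) ≤ L₁ (Pi.single i 1)) :
    γ * L₂ v ≤ L₁ v := by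
  rw [lin_apply_sum L₁, lin_apply_sum L₂, Finset.mul_sum]
  apply Finset.sum_le_sum
  intro i _
  have := mul_le_mul_of_nonneg_left (h i) (hv i)
  calc γ * (v i * L₂ (Pi.single i 1)) = v i * (γ * L₂ (Pi.single i 1)) := by ring
    _ ≤ v i * L₁ (Pi.single i 1) := this

/-- Mean value theorem along a segment. -/
lemma seg_mvt {n : ℕ} (F : (Fin n → ℝ) → ℝ) (hF : Differentiable ℝ F)
    (a v : Fin n → ℝ) :
    ∃ c ∈ Ioo (0 : ℝ) 1, F (a + v) - F a = fderiv ℝ F (a + c • v) v := by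
  have hg : ∀ t : ℝ, HasDerivAt (fun t : ℝ => a + t • v) v t := by
    intro t
    simpa using ((hasDerivAt_id t).smul_const v).const_add a
  have hd : ∀ t : ℝ, HasDerivAt (fun t : ℝ => F (a + t • v))
      (fderiv ℝ F (a + t • v) v) t := by
    intro t
    exact ((hF (a + t • v)).hasFDerivAt).comp_hasDerivAt t (hg t)
  obtain ⟨c, hc, hceq⟩ := exists_hasDerivAt_eq_slope (fun t : ℝ => F (a + t • v))
    (fun t => fderiv ℝ F (a + t • v) v) one_pos
    (fun t _ => (hd t).continuousAt.continuousWithinAt)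
    (fun t _ => hd t)
  refine ⟨c, hc, ?_⟩
  rw [hceq]
  simp

/-- For a differentiable, nonnegative, γ-weakly DR-submodular
`F : [0,1]^n → ℝ≥0` and any `x, y ∈ [0,1]^n`,
`⟨y − x, ∇F(x)⟩ ≥ γ F(x ∨ y) + (1/γ) F(x ∧ y) − ((1+γ²)/γ) F(x)`. -/
theorem stmt7 (n : ℕ) (γ : ℝ) (hγ0 : 0 < γ) (hγ1 : γ ≤ 1)
    (F : (Fin n → ℝ) → ℝ)
    (hF : Differentiable ℝ F)
    (hnonneg : ∀ x ∈ Icc (0 : Fin n → ℝ) 1, 0 ≤ F x)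
    (hDR : ∀ x ∈ Icc (0 : Fin n → ℝ) 1, ∀ y ∈ Icc (0 : Fin n → ℝ) 1,
      x ≤ y → ∀ i, γ * fderiv ℝ F y (Pi.single i 1) ≤ fderiv ℝ F x (Pi.single i 1))
    (x y : Fin n → ℝ) (hx : x ∈ Icc (0 : Fin n → ℝ) 1) (hy : y ∈ Icc (0 : Fin n → ℝ) 1) :
    γ * F (x ⊔ y) + 1 / γ * F (x ⊓ y) - (1 + γ ^ 2) / γ * F x
      ≤ fderiv ℝ F x (y - x) := by
  set z := x ⊔ y with hz
  set w := x ⊓ y with hw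
  have hxz : x ≤ z := le_sup_left
  have hwx : w ≤ x := inf_le_left
  have hzbox : z ∈ Icc (0 : Fin n → ℝ) 1 := ⟨le_trans hx.1 hxz, sup_le hx.2 hy.2⟩
  have hwbox : w ∈ Icc (0 : Fin n → ℝ) 1 := ⟨le_inf hx.1 hy.1, le_trans hwx hx.2⟩
  -- Upper bound part: γ (F z - F x) ≤ ∇F(x)·(z-x)
  obtain ⟨c, hc, hceq⟩ := seg_mvt F hF x (z - x)
  set p := x + c • (z - x) with hp
  have hxp : x ≤ p := by
    intro i
    have : 0 ≤ c * (z i - x i) :=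
      mul_nonneg hc.1.le (sub_nonneg.2 (hxz i))
    simp only [hp, Pi.add_apply, Pi.smul_apply, smul_eq_mul, Pi.sub_apply]
    linarith
  have hpz : p ≤ z := by
    intro i
    have h1 : c * (z i - x i) ≤ 1 * (z i - x i) :=
      mul_le_mul_of_nonneg_right hc.2.le (sub_nonneg.2 (hxz i))
    simp only [hp, Pi.add_apply, Pi.smul_apply, smul_eq_mul, Pi.sub_apply]
    linarith
  have hpbox : p ∈ Icc (0 : Fin n → ℝ) 1 := ⟨le_trans hx.1 hxp, le_trans hpz hzbox.2⟩
  have hub : γ * (F z - F x) ≤ fderiv ℝ F x (z - x) := by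
    have hcomp := hDR x hx p hpbox hxp
    have := lin_le γ (fderiv ℝ F x) (fderiv ℝ F p) (z - x)
      (fun i => sub_nonneg.2 (hxz i)) hcomp
    rw [← hceq] at this
    simpa using this
  -- Lower bound part: γ ∇F(x)·(x-w) ≤ F x - F w
  obtain ⟨c', hc', hceq'⟩ := seg_mvt F hF w (x - w)
  have hxw : w + (x - w) = x := by ring
  rw [hxw] at hceq'
  set q := w + c' • (x - w) with hq
  have hwq : w ≤ q := by
    intro i
    have : 0 ≤ c' * (x i - w i) := mul_nonneg hc'.1.le (sub_nonneg.2 (hwx i))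
    simp only [hq, Pi.add_apply, Pi.smul_apply, smul_eq_mul, Pi.sub_apply]
    linarith
  have hqx : q ≤ x := by
    intro i
    have h1 : c' * (x i - w i) ≤ 1 * (x i - w i) :=
      mul_le_mul_of_nonneg_right hc'.2.le (sub_nonneg.2 (hwx i))
    simp only [hq, Pi.add_apply, Pi.smul_apply, smul_eq_mul, Pi.sub_apply]
    linarith
  have hqbox : q ∈ Icc (0 : Fin n → ℝ) 1 := ⟨le_trans hwbox.1 hwq, le_trans hqx hx.2⟩
  have hlb : γ * fderiv ℝ F x (x - w) ≤ F x - F w := by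
    have hcomp := hDR q hqbox x hx hqx
    have := lin_le γ (fderiv ℝ F q) (fderiv ℝ F x) (x - w)
      (fun i => sub_nonneg.2 (hwx i)) hcomp
    rw [← hceq'] at this
    exact this
  -- combine
  have hsum : z + w = x + y := by
    funext i
    simpa [hz, hw] using max_add_min (x i) (y i)
  have hdecomp : y - x = (z - x) - (x - w) := by
    have : z - x - (x - w) = z + w - x - x := by ring
    rw [this, hsum]; ring
  rw [hdecomp, map_sub]
  have hlb' : fderiv ℝ F x (x - w) ≤ 1 / γ * (F x - F w) := by
    have h := (le_div_iff₀ hγ0).mpr (show fderiv ℝ F x (x - w) * γ ≤ F x - F w by linarith [hlb])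
    calc fderiv ℝ F x (x - w) ≤ (F x - F w) / γ := h
      _ = 1 / γ * (F x - F w) := by ring
  have hfs : (1 + γ ^ 2) / γ * F x = γ * F x + 1 / γ * F x := by
    field_simp; ring
  have hub' : γ * F z - γ * F x ≤ fderiv ℝ F x (z - x) := by linarith [hub]
  nlinarith [hlb', hub', hfs]
end

section
/- Let φ:[0,1] → ℝ be differentiable and suppose φ'(s) ≥ γ·φ'(t) for all 0 ≤ s ≤ t ≤ 1, where γ ∈ (0,1]. Then for every λ ∈ (0,1), φ(λ) ≥ ((1−λ)·φ(0) + γ²λ·φ(1)) / ((1−λ) + γ²λ). -/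
open Set

/-- If `φ : [0,1] → ℝ` is differentiable with `φ'(s) ≥ γ φ'(t)` for all
`0 ≤ s ≤ t ≤ 1` and `γ ∈ (0,1]`, then for every `λ ∈ (0,1)`,
`φ(λ) ≥ ((1−λ) φ(0) + γ²λ φ(1)) / ((1−λ) + γ²λ)`. -/
theorem stmt8 (γ : ℝ) (hγ0 : 0 < γ) (hγ1 : γ ≤ 1)
    (φ φ' : ℝ → ℝ)
    (hφ : ∀ t ∈ Icc (0 : ℝ) 1, HasDerivAt φ (φ' t) t)
    (hmono : ∀ s ∈ Icc (0 : ℝ) 1, ∀ t ∈ Icc (0 : ℝ) 1, s ≤ t → γ * φ' t ≤ φ' s)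
    (l : ℝ) (hl : l ∈ Ioo (0 : ℝ) 1) :
    ((1 - l) * φ 0 + γ ^ 2 * l * φ 1) / ((1 - l) + γ ^ 2 * l) ≤ φ l := by
  obtain ⟨hl0, hl1⟩ := hl
  have hlI : l ∈ Icc (0 : ℝ) 1 := ⟨hl0.le, hl1.le⟩
  have hcont : ContinuousOn φ (Icc 0 1) := fun x hx =>
    (hφ x hx).continuousAt.continuousWithinAt
  -- MVT on [0, l]
  obtain ⟨a, ha, hda⟩ := exists_hasDerivAt_eq_slope φ φ' hl0
    (hcont.mono (Icc_subset_Icc le_rfl hl1.le))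
    (fun x hx => hφ x ⟨hx.1.le, hx.2.le.trans hl1.le⟩)
  -- MVT on [l, 1]
  obtain ⟨b, hb, hdb⟩ := exists_hasDerivAt_eq_slope φ φ' hl1
    (hcont.mono (Icc_subset_Icc hl0.le le_rfl))
    (fun x hx => hφ x ⟨hl0.le.trans hx.1.le, hx.2.le⟩)
  have haI : a ∈ Icc (0 : ℝ) 1 := ⟨ha.1.le, ha.2.le.trans hl1.le⟩
  have hbI : b ∈ Icc (0 : ℝ) 1 := ⟨hl0.le.trans hb.1.le, hb.2.le⟩
  have h1 : γ * φ' l ≤ φ' a := hmono a haI l hlI ha.2.le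
  have h2 : γ * φ' b ≤ φ' l := hmono l hlI b hbI hb.1.le
  have e1 : φ' a = (φ l - φ 0) / (l - 0) := hda
  have e2 : φ' b = (φ 1 - φ l) / (1 - l) := hdb
  have e1' : φ l - φ 0 = l * φ' a := by
    field_simp at e1; linarith [e1]
  have e2' : φ 1 - φ l = (1 - l) * φ' b := by
    rw [e2, mul_div_cancel₀ _ (by linarith : (1 : ℝ) - l ≠ 0)]
  rw [div_le_iff₀ (by nlinarith)]
  have k1 := mul_le_mul_of_nonneg_left h1 (mul_pos hl0 (sub_pos.2 hl1)).le
  have k2 := mul_le_mul_of_nonneg_left h2 (mul_pos (mul_pos hγ0 hl0) (sub_pos.2 hl1)).le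
  have g1 : (1 - l) * (φ l - φ 0) = (1 - l) * (l * φ' a) := by rw [e1']
  have g2 : γ ^ 2 * l * (φ 1 - φ l) = γ ^ 2 * l * ((1 - l) * φ' b) := by rw [e2']
  nlinarith [k1, k2, g1, g2]
end

section
/- Let F:[0,1]^n → ℝ≥0 be differentiable and γ-weakly DR-submodular for γ ∈ (0,1], with all coordinate sums in [0,1]^n. Fix integers r ≥ 1, vectors x(1),…,x(r) ∈ [0,1]^n and weights p₁,…,p_r ∈ [0,1]. Define βγ(p) := γ²p/(1−p+γ²p) and the probabilistic sum ⊕ by (u ⊕ v)_i = u_i + v_i − u_i v_i. Then F(⊕_{i=1}^r p_i·x(i)) ≥ ∑_{S ⊆ [r]} (∏_{i∈S} βγ(p_i))·(∏_{i∉S} (1−βγ(p_i)))·F(⊕_{i∈S} x(i)), where the ⊕ over the empty set is the zero vector. -/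
open Set

/-! Induct on the index set. Adding one vector `x a` with weight `p` splits the sum according to
whether `a ∈ S`; the two halves are the induction hypotheses for `F` and for `u ↦ F (u ⊕ x a)`,
which is again `γ`-weakly DR-submodular because `u ↦ u ⊕ y = (1 - y) * u + y` is monotone and
affine with a nonnegative diagonal linear part. What remains is one step: along the segment
`g t = F (z ⊕ t • y) = F (z + t • (1 - z) * y)` the derivative satisfies `γ g' t ≤ g' s` for
`s ≤ t`, so comparing `g` with the slope `g' q` on `[0, q]` and on `[q, 1]` gives
`γ² q (g 1 - g 0) ≤ (1 - q + γ² q) (g q - g 0)`, i.e.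
`F (z ⊕ q • y) ≥ (1 - β) F z + β F (z ⊕ y)` with `β = γ² q / (1 - q + γ² q)`. -/

section ProbabilisticSum

variable {ι κ : Type*}

def probAdd (u v : ι → ℝ) : ι → ℝ := u + v - u * v

def probSum (S : Finset κ) (x : κ → ι → ℝ) : ι → ℝ := fun j => 1 - ∏ i ∈ S, (1 - x i j)

lemma probAdd_eq_mul_add (u v : ι → ℝ) : probAdd u v = (1 - v) * u + v := by
  unfold probAdd; ring

lemma probSum_empty (x : κ → ι → ℝ) : probSum ∅ x = 0 := by
  funext j; simp [probSum]

lemma probSum_insert [DecidableEq κ] {a : κ} {S : Finset κ} (ha : a ∉ S) (x : κ → ι → ℝ) :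
    probSum (insert a S) x = probAdd (probSum S x) (x a) := by
  funext j
  simp only [probSum, probAdd, Finset.prod_insert ha, Pi.add_apply, Pi.sub_apply, Pi.mul_apply]
  ring

lemma probAdd_mem_Icc {u v : ι → ℝ} (hu : u ∈ Icc 0 1) (hv : v ∈ Icc 0 1) :
    probAdd u v ∈ Icc 0 1 := by
  refine ⟨fun j => ?_, fun j => ?_⟩ <;>
  · have := hu.1 j; have := hu.2 j; have := hv.1 j; have := hv.2 j
    simp only [probAdd, Pi.add_apply, Pi.sub_apply, Pi.mul_apply, Pi.zero_apply,
      Pi.one_apply] at *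
    nlinarith

lemma probAdd_le_probAdd_left {u v y : ι → ℝ} (huv : u ≤ v) (hy : y ≤ 1) :
    probAdd u y ≤ probAdd v y := fun j => by
  have := huv j; have := hy j
  simp only [probAdd, Pi.add_apply, Pi.sub_apply, Pi.mul_apply, Pi.one_apply] at *
  nlinarith

lemma smul_mem_Icc {q : ℝ} (hq : q ∈ Icc (0 : ℝ) 1) {y : ι → ℝ} (hy : y ∈ Icc 0 1) :
    q • y ∈ Icc 0 1 :=
  ⟨smul_nonneg hq.1 hy.1, fun j => mul_le_one₀ hq.2 (hy.1 j) (hy.2 j)⟩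

lemma probSum_mem_Icc [DecidableEq κ] (S : Finset κ) {x : κ → ι → ℝ}
    (hx : ∀ i, x i ∈ Icc 0 1) : probSum S x ∈ Icc 0 1 := by
  induction S using Finset.induction_on with
  | empty => rw [probSum_empty]; exact left_mem_Icc.2 zero_le_one
  | insert a S ha ih => rw [probSum_insert ha]; exact probAdd_mem_Icc ih (hx a)

lemma sum_powerset_insert_mul_prod_mul [DecidableEq κ] {a : κ} {T : Finset κ} (ha : a ∉ T)
    (β : κ → ℝ) (f : Finset κ → ℝ) :
    ∑ S ∈ (insert a T).powerset, (∏ i ∈ S, β i) * (∏ i ∈ insert a T \ S, (1 - β i)) * f S =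
      (1 - β a) * ∑ S ∈ T.powerset, (∏ i ∈ S, β i) * (∏ i ∈ T \ S, (1 - β i)) * f S +
      β a * ∑ S ∈ T.powerset, (∏ i ∈ S, β i) * (∏ i ∈ T \ S, (1 - β i)) * f (insert a S) := by
  rw [Finset.sum_powerset_insert ha, Finset.mul_sum, Finset.mul_sum]
  congr 1 <;> refine Finset.sum_congr rfl fun S hS => ?_
  · have haS : a ∉ S := fun h => ha (Finset.mem_powerset.1 hS h)
    rw [Finset.insert_sdiff_of_notMem _ haS,
      Finset.prod_insert fun h => ha (Finset.mem_sdiff.1 h).1]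
    ring
  · have haS : a ∉ S := fun h => ha (Finset.mem_powerset.1 hS h)
    rw [Finset.insert_sdiff_insert, Finset.sdiff_insert_of_notMem ha, Finset.prod_insert haS]
    ring

end ProbabilisticSum

noncomputable def mixWeight (γ p : ℝ) : ℝ := γ ^ 2 * p / (1 - p + γ ^ 2 * p)

lemma one_sub_add_sq_mul_pos {γ q : ℝ} (hγ : 0 < γ) (hq : q ∈ Icc (0 : ℝ) 1) :
    0 < 1 - q + γ ^ 2 * q := by
  rcases hq.1.eq_or_lt with rfl | hq0
  · norm_num
  · nlinarith [mul_pos (pow_pos hγ 2) hq0, hq.2]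

lemma mixWeight_nonneg (γ : ℝ) {p : ℝ} (hp : p ∈ Icc (0 : ℝ) 1) : 0 ≤ mixWeight γ p :=
  div_nonneg (by nlinarith [sq_nonneg γ, hp.1]) (by nlinarith [sq_nonneg γ, hp.1, hp.2])

lemma mixWeight_le_one (γ : ℝ) {p : ℝ} (hp : p ∈ Icc (0 : ℝ) 1) : mixWeight γ p ≤ 1 :=
  div_le_one_of_le₀ (by linarith [hp.2]) (by nlinarith [sq_nonneg γ, hp.1, hp.2])

theorem sq_mul_sub_le_of_deriv_le {g : ℝ → ℝ} (hg : Differentiable ℝ g) {γ q : ℝ} (hγ : 0 ≤ γ)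
    (hq : q ∈ Icc (0 : ℝ) 1)
    (hg' : ∀ s t, 0 ≤ s → s ≤ t → t ≤ 1 → γ * deriv g t ≤ deriv g s) :
    γ ^ 2 * q * (g 1 - g 0) ≤ (1 - q + γ ^ 2 * q) * (g q - g 0) := by
  have hlow : γ * deriv g q * (q - 0) ≤ g q - g 0 := by
    refine (convex_Icc 0 q).mul_sub_le_image_sub_of_le_deriv hg.continuous.continuousOn
      (hg.differentiableOn.mono interior_subset) (fun t ht => ?_) 0 (left_mem_Icc.2 hq.1) q
      (right_mem_Icc.2 hq.1) hq.1
    rw [interior_Icc] at ht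
    exact hg' t q ht.1.le ht.2.le hq.2
  have hup : γ * g 1 - γ * g q ≤ deriv g q * (1 - q) := by
    refine (convex_Icc q 1).image_sub_le_mul_sub_of_deriv_le
      (hg.const_mul γ).continuous.continuousOn ((hg.const_mul γ).differentiableOn.mono interior_subset)
      (fun t ht => ?_) q (left_mem_Icc.2 hq.2) 1 (right_mem_Icc.2 hq.2) hq.2
    rw [interior_Icc] at ht
    rw [deriv_const_mul _ (hg t)]
    exact hg' q t hq.1 ht.1.le ht.2.le
  nlinarith [mul_le_mul_of_nonneg_left hup (mul_nonneg hγ hq.1),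
    mul_le_mul_of_nonneg_left hlow (sub_nonneg.2 hq.2)]

section WeakDR

variable {ι : Type*} [Fintype ι]

lemma hasFDerivAt_comp_probAdd {F : (ι → ℝ) → ℝ} (hF : Differentiable ℝ F) (y u : ι → ℝ) :
    HasFDerivAt (fun u => F (probAdd u y))
      ((fderiv ℝ F (probAdd u y)).comp ((1 - y) • ContinuousLinearMap.id ℝ (ι → ℝ))) u := by
  have h : HasFDerivAt (fun u : ι → ℝ => probAdd u y)
      ((1 - y) • ContinuousLinearMap.id ℝ (ι → ℝ)) u := by
    simp_rw [probAdd_eq_mul_add]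
    exact ((hasFDerivAt_id u).const_mul (1 - y)).add_const y
  exact (hF _).hasFDerivAt.comp u h

lemma Differentiable.comp_probAdd {F : (ι → ℝ) → ℝ} (hF : Differentiable ℝ F) (y : ι → ℝ) :
    Differentiable ℝ (fun u => F (probAdd u y)) :=
  fun u => (hasFDerivAt_comp_probAdd hF y u).differentiableAt

variable [DecidableEq ι]

def IsWeakDRSubmodularOn (γ : ℝ) (F : (ι → ℝ) → ℝ) (s : Set (ι → ℝ)) : Prop :=
  ∀ x ∈ s, ∀ y ∈ s, x ≤ y → ∀ i, γ * fderiv ℝ F y (Pi.single i 1) ≤ fderiv ℝ F x (Pi.single i 1)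

namespace IsWeakDRSubmodularOn

variable {γ : ℝ} {F : (ι → ℝ) → ℝ}

theorem mul_fderiv_le {s : Set (ι → ℝ)} (h : IsWeakDRSubmodularOn γ F s) {u v w : ι → ℝ}
    (hu : u ∈ s) (hv : v ∈ s) (huv : u ≤ v) (hw : 0 ≤ w) :
    γ * fderiv ℝ F v w ≤ fderiv ℝ F u w := by
  have hexp : ∀ z, fderiv ℝ F z w = ∑ i, w i * fderiv ℝ F z (Pi.single i 1) := fun z => by
    conv_lhs => rw [← Finset.univ_sum_single w]
    simp only [map_sum]
    refine Finset.sum_congr rfl fun i _ => ?_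
    rw [← smul_eq_mul, ← map_smul, ← Pi.single_smul', smul_eq_mul, mul_one]
  rw [hexp, hexp, Finset.mul_sum]
  refine Finset.sum_le_sum fun i _ => ?_
  rw [mul_left_comm]
  exact mul_le_mul_of_nonneg_left (h u hu v hv huv i) (hw i)

theorem comp_probAdd (h : IsWeakDRSubmodularOn γ F (Icc 0 1)) (hF : Differentiable ℝ F)
    {y : ι → ℝ} (hy : y ∈ Icc 0 1) :
    IsWeakDRSubmodularOn γ (fun u => F (probAdd u y)) (Icc 0 1) := by
  intro u hu v hv huv i
  simp only [(hasFDerivAt_comp_probAdd hF y _).fderiv, ContinuousLinearMap.comp_apply,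
    smul_apply, ContinuousLinearMap.id_apply, smul_eq_mul]
  exact h.mul_fderiv_le (probAdd_mem_Icc hu hy) (probAdd_mem_Icc hv hy)
    (probAdd_le_probAdd_left huv hy.2)
    (mul_nonneg (sub_nonneg.2 hy.2) (Pi.single_nonneg.2 zero_le_one))

theorem mixWeight_mul_add_le (h : IsWeakDRSubmodularOn γ F (Icc 0 1)) (hF : Differentiable ℝ F)
    (hγ : 0 < γ) {z y : ι → ℝ} (hz : z ∈ Icc 0 1) (hy : y ∈ Icc 0 1) {q : ℝ}
    (hq : q ∈ Icc (0 : ℝ) 1) :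
    (1 - mixWeight γ q) * F z + mixWeight γ q * F (probAdd z y) ≤ F (probAdd z (q • y)) := by
  set w : ι → ℝ := (1 - z) * y with hw_def
  have hline : ∀ t : ℝ, probAdd z (t • y) = z + t • w := fun t => by
    funext j
    simp only [probAdd, hw_def, Pi.add_apply, Pi.sub_apply, Pi.mul_apply, Pi.smul_apply,
      Pi.one_apply, smul_eq_mul]
    ring
  have hw : 0 ≤ w := mul_nonneg (sub_nonneg.2 hz.2) hy.1
  have hmem : ∀ t ∈ Icc (0 : ℝ) 1, z + t • w ∈ Icc 0 1 := fun t ht =>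
    hline t ▸ probAdd_mem_Icc hz (smul_mem_Icc ht hy)
  have hderiv : ∀ t : ℝ, HasDerivAt (fun t => F (z + t • w)) (fderiv ℝ F (z + t • w) w) t :=
    fun t => (hF _).hasFDerivAt.comp_hasDerivAt t
      (by simpa using ((hasDerivAt_id t).smul_const w).const_add z)
  have key := sq_mul_sub_le_of_deriv_le (fun t => (hderiv t).differentiableAt) hγ.le hq
    fun s t hs hst ht => by
      rw [(hderiv s).deriv, (hderiv t).deriv]
      exact h.mul_fderiv_le (hmem s ⟨hs, hst.trans ht⟩) (hmem t ⟨hs.trans hst, ht⟩)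
        (add_le_add_right (smul_le_smul_of_nonneg_right hst hw) z) hw
  rw [← hline, ← hline, ← hline, zero_smul, one_smul,
    show probAdd z 0 = z by simp [probAdd]] at key
  have hstep : mixWeight γ q * (F (probAdd z y) - F z) ≤ F (probAdd z (q • y)) - F z := by
    rw [mixWeight, div_mul_eq_mul_div, div_le_iff₀ (one_sub_add_sq_mul_pos hγ hq)]
    linarith
  linarith

theorem sum_powerset_le {κ : Type*} [DecidableEq κ] (h : IsWeakDRSubmodularOn γ F (Icc 0 1))
    (hF : Differentiable ℝ F) (hγ : 0 < γ) {x : κ → ι → ℝ} (hx : ∀ i, x i ∈ Icc 0 1)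
    {p : κ → ℝ} (hp : ∀ i, p i ∈ Icc (0 : ℝ) 1) (T : Finset κ) :
    ∑ S ∈ T.powerset, (∏ i ∈ S, mixWeight γ (p i)) * (∏ i ∈ T \ S, (1 - mixWeight γ (p i))) *
        F (probSum S x)
      ≤ F (probSum T fun i => p i • x i) := by
  induction T using Finset.induction_on generalizing F with
  | empty => simp [probSum_empty]
  | insert a T ha ih =>
    have hz := probSum_mem_Icc T fun i => smul_mem_Icc (hp i) (hx i)
    have hG := ih (h.comp_probAdd hF (hx a)) (hF.comp_probAdd (x a))
    rw [sum_powerset_insert_mul_prod_mul ha, probSum_insert ha]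
    refine le_trans (add_le_add ?_ ?_) (h.mixWeight_mul_add_le hF hγ hz (hx a) (hp a))
    · exact mul_le_mul_of_nonneg_left (ih h hF) (sub_nonneg.2 (mixWeight_le_one γ (hp a)))
    · refine mul_le_mul_of_nonneg_left ((Finset.sum_congr rfl fun S hS => ?_).trans_le hG)
        (mixWeight_nonneg γ (hp a))
      rw [probSum_insert fun haS => ha (Finset.mem_powerset.1 hS haS)]

end IsWeakDRSubmodularOn

end WeakDR

theorem stmt15_general (n r : ℕ) (γ : ℝ) (hγ0 : 0 < γ)
    (F : (Fin n → ℝ) → ℝ)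
    (hF : Differentiable ℝ F)
    (hDR : ∀ x ∈ Icc (0 : Fin n → ℝ) 1, ∀ y ∈ Icc (0 : Fin n → ℝ) 1,
      x ≤ y → ∀ i, γ * fderiv ℝ F y (Pi.single i 1) ≤ fderiv ℝ F x (Pi.single i 1))
    (x : Fin r → (Fin n → ℝ)) (hx : ∀ i, x i ∈ Icc (0 : Fin n → ℝ) 1)
    (p : Fin r → ℝ) (hp : ∀ i, p i ∈ Icc (0 : ℝ) 1) :
    ∑ S ∈ Finset.univ.powerset,
        (∏ i ∈ S, γ ^ 2 * p i / (1 - p i + γ ^ 2 * p i)) *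
        (∏ i ∈ Sᶜ, (1 - γ ^ 2 * p i / (1 - p i + γ ^ 2 * p i))) *
        F (fun j => 1 - ∏ i ∈ S, (1 - x i j))
      ≤ F (fun j => 1 - ∏ i : Fin r, (1 - p i * x i j)) := by
  simp_rw [Finset.compl_eq_univ_sdiff]
  exact IsWeakDRSubmodularOn.sum_powerset_le hDR hF hγ0 hx hp Finset.univ

/-- the weakly-DR mixture inequality. For a differentiable, nonnegative,
γ-weakly DR-submodular `F : [0,1]^n → ℝ≥0`, vectors `x(1),…,x(r) ∈ [0,1]^n` and
weights `p₁,…,p_r ∈ [0,1]`, with `βγ(p) := γ²p/(1−p+γ²p)` and probabilistic sum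
`(⊕_{i∈S} v(i))_j = 1 − ∏_{i∈S} (1 − v(i)_j)`,
`F(⊕_i p_i x(i)) ≥ ∑_{S⊆[r]} (∏_{i∈S} βγ(p_i)) (∏_{i∉S} (1−βγ(p_i))) F(⊕_{i∈S} x(i))`. -/
theorem stmt15 (n r : ℕ) (hr : 1 ≤ r) (γ : ℝ) (hγ0 : 0 < γ) (hγ1 : γ ≤ 1)
    (F : (Fin n → ℝ) → ℝ)
    (hF : Differentiable ℝ F)
    (hnonneg : ∀ x ∈ Icc (0 : Fin n → ℝ) 1, 0 ≤ F x)
    (hDR : ∀ x ∈ Icc (0 : Fin n → ℝ) 1, ∀ y ∈ Icc (0 : Fin n → ℝ) 1,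
      x ≤ y → ∀ i, γ * fderiv ℝ F y (Pi.single i 1) ≤ fderiv ℝ F x (Pi.single i 1))
    (x : Fin r → (Fin n → ℝ)) (hx : ∀ i, x i ∈ Icc (0 : Fin n → ℝ) 1)
    (p : Fin r → ℝ) (hp : ∀ i, p i ∈ Icc (0 : ℝ) 1) :
    ∑ S ∈ Finset.univ.powerset,
        (∏ i ∈ S, γ ^ 2 * p i / (1 - p i + γ ^ 2 * p i)) *
        (∏ i ∈ Sᶜ, (1 - γ ^ 2 * p i / (1 - p i + γ ^ 2 * p i))) *
        F (fun j => 1 - ∏ i ∈ S, (1 - x i j))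
      ≤ F (fun j => 1 - ∏ i : Fin r, (1 - p i * x i j)) :=
  stmt15_general n r γ hγ0 F hF hDR x hx p hp
end
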